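/- arXiv:2105.05987 — 2 statements merged into one kernel-verified Lean document; each statement's English description precedes it below -/
import Mathlib

section
/- Let G = ([n], E_1, …, E_τ) be a monotonically shrinking temporal linear forest or a monotonically shrinking temporal cycle, and let p_1, p_2 ∈ [n]. Then for the strategy profile (p_1, p_2), the final coloring of the vertices produced by the two-player temporal diffusion game Diff(G, 2) equals the coloring produced by the two-player temporal Voronoi game Vor(G, 2): every vertex receives color 1 in one game if and only if it does in the other, and likewise for color 2. -/
open Finset

/-- A temporal graph on vertex set `{1, …, n}` with layers `E 1, …, E tau`. -/
structure TemporalGraph where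
  n : ℕ
  tau : ℕ
  htau : 1 ≤ tau
  E : ℕ → Finset (Sym2 ℕ)

namespace TemporalGraph

/-- The vertex set `[n] = {1, …, n}`. -/
def V (G : TemporalGraph) : Finset ℕ := Finset.Icc 1 G.n

/-- The underlying edge set `⋃_{t=1}^τ E_t`. -/
def underlying (G : TemporalGraph) : Finset (Sym2 ℕ) := (Finset.Icc 1 G.tau).biUnion G.E

/-- The layer used at time `t ≥ 1`: `E t` for `t ≤ τ`, repeating `E τ` afterwards. -/
def layer (G : TemporalGraph) (t : ℕ) : Finset (Sym2 ℕ) := if t ≤ G.tau then G.E t else G.E G.tau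

/-- Edges of the path `1 – 2 – ⋯ – n`. -/
def pathEdges (n : ℕ) : Finset (Sym2 ℕ) := (Finset.Icc 1 (n - 1)).image (fun i => s(i, i + 1))

/-- Edges of the cycle on `[n]`: the path edges together with `{n, 1}`. -/
def cycleEdges (n : ℕ) : Finset (Sym2 ℕ) := insert s(n, 1) (pathEdges n)

/-- A temporal path of size `n`: the underlying graph is the path `1 – 2 – ⋯ – n`. -/
def IsPath (G : TemporalGraph) : Prop := 2 ≤ G.n ∧ G.underlying = pathEdges G.n

/-- A temporal cycle of size `n`: the underlying graph is the cycle on `[n]`. -/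
def IsCycle (G : TemporalGraph) : Prop := 3 ≤ G.n ∧ G.underlying = cycleEdges G.n

/-- The underlying simple graph of a temporal graph. -/
def underlyingGraph (G : TemporalGraph) : SimpleGraph ℕ where
  Adj u v := u ≠ v ∧ s(u, v) ∈ G.underlying
  symm := ⟨by
    intro u v h
    refine ⟨h.1.symm, ?_⟩
    rw [Sym2.eq_swap]
    exact h.2⟩
  loopless := ⟨fun v h => h.1 rfl⟩

/-- A temporal linear forest: all edges are loopless edges on the vertex set `[n]`,
and every connected component of the underlying graph is a path (equivalently, the
underlying graph is acyclic and every vertex lies on at most two edges). -/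
def IsLinearForest (G : TemporalGraph) : Prop :=
  (∀ e ∈ G.underlying, ¬ e.IsDiag ∧ ∀ x ∈ e, x ∈ G.V) ∧
  G.underlyingGraph.IsAcyclic ∧
  ∀ v : ℕ, (G.underlying.filter (fun e => v ∈ e)).card ≤ 2

/-- Superset temporal graph: the last layer equals the underlying graph. -/
def Superset (G : TemporalGraph) : Prop := G.E G.tau = G.underlying

/-- Monotonically growing: no edge disappears over time. -/
def Growing (G : TemporalGraph) : Prop := ∀ i, 1 ≤ i → i < G.tau → G.E i ⊆ G.E (i + 1)

/-- Monotonically shrinking: no edge appears over time. -/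
def Shrinking (G : TemporalGraph) : Prop := ∀ i, 1 ≤ i → i < G.tau → G.E (i + 1) ⊆ G.E i

/-! ### The temporal diffusion game -/

/-- Initial coloring for the diffusion game: `p i` is colored `i`, except that a
vertex chosen by both players is colored gray (`0`). -/
def diffInit (p1 p2 : ℕ) : ℕ → Option ℕ := fun v =>
  if v = p1 ∧ v = p2 then some 0
  else if v = p1 then some 1
  else if v = p2 then some 2
  else none

open Classical in
/-- One diffusion step on layer `Et`: an uncolored vertex with a neighbor of color
`i ∈ {1,2}` and no neighbor of the other color gets color `i`; an uncolored vertex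
with neighbors of both colors becomes gray (`0`); colored vertices keep their color. -/
noncomputable def diffStep (Vset : Finset ℕ) (Et : Finset (Sym2 ℕ)) (c : ℕ → Option ℕ) :
    ℕ → Option ℕ := fun v =>
  match c v with
  | some i => some i
  | none =>
    if v ∈ Vset ∧ (∃ u, s(u, v) ∈ Et ∧ c u = some 1) ∧ ¬ (∃ u, s(u, v) ∈ Et ∧ c u = some 2) then
      some 1
    else if v ∈ Vset ∧ (∃ u, s(u, v) ∈ Et ∧ c u = some 2) ∧ ¬ (∃ u, s(u, v) ∈ Et ∧ c u = some 1) then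
      some 2
    else if v ∈ Vset ∧ (∃ u, s(u, v) ∈ Et ∧ c u = some 1) ∧ (∃ u, s(u, v) ∈ Et ∧ c u = some 2) then
      some 0
    else none

/-- The coloring of the diffusion game after `t` steps (step `t` uses layer `t`,
where the last layer is repeated after time `τ`). -/
noncomputable def diffColoring (G : TemporalGraph) (p1 p2 : ℕ) : ℕ → ℕ → Option ℕ
  | 0 => diffInit p1 p2
  | t + 1 => diffStep G.V (G.layer (t + 1)) (diffColoring G p1 p2 t)

/-- The final coloring of the diffusion game. Since colored vertices never change
color and each non-stabilized step colors a new vertex, the process has stabilized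
after `τ + n` steps, i.e. this is the coloring once it no longer changes. -/
noncomputable def diffFinal (G : TemporalGraph) (p1 p2 : ℕ) : ℕ → Option ℕ :=
  diffColoring G p1 p2 (G.tau + G.n)

open Classical in
/-- Payoff of player `i` in the temporal diffusion game: the number of vertices
finally colored `i`. -/
noncomputable def diffPayoff (G : TemporalGraph) (p1 p2 i : ℕ) : ℕ :=
  (G.V.filter (fun v => diffFinal G p1 p2 v = some i)).card

/-- Nash equilibrium of the two-player temporal diffusion game `Diff(G, 2)`. -/
def diffNE (G : TemporalGraph) (p1 p2 : ℕ) : Prop :=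
  p1 ∈ G.V ∧ p2 ∈ G.V ∧
  (∀ q ∈ G.V, diffPayoff G q p2 1 ≤ diffPayoff G p1 p2 1) ∧
  (∀ q ∈ G.V, diffPayoff G p1 q 2 ≤ diffPayoff G p1 p2 2)

/-! ### Temporal distances and the temporal Voronoi game -/

/-- `G.reachesBy u t v`: there is a strict temporal walk from `u` to `v` with
arrival time at most `t` (layers after `τ` are the last layer `E τ`). -/
def reachesBy (G : TemporalGraph) (u : ℕ) : ℕ → ℕ → Prop
  | 0 => fun v => v = u
  | t + 1 => fun v =>
      reachesBy G u t v ∨ ∃ w, reachesBy G u t w ∧ s(w, v) ∈ G.layer (t + 1)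

/-- `u` reaches `v` (until step `τ`). -/
def reaches (G : TemporalGraph) (u v : ℕ) : Prop := G.reachesBy u G.tau v

/-- The temporal distance `td(u, v)`: the minimum arrival time of a strict
temporal walk from `u` to `v` (`0` for `u = v`, `⊤` if there is no such walk). -/
noncomputable def td (G : TemporalGraph) (u v : ℕ) : ℕ∞ :=
  sInf {t : ℕ∞ | ∃ k : ℕ, t = (k : ℕ∞) ∧ G.reachesBy u k v}

open Classical in
/-- The coloring in the temporal Voronoi game: `v` gets color `i` if player `i`
arrives strictly first, and is gray (`0`) on finite ties. -/
noncomputable def vorColor (G : TemporalGraph) (p1 p2 v : ℕ) : Option ℕ :=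
  if G.td p1 v < G.td p2 v then some 1
  else if G.td p2 v < G.td p1 v then some 2
  else if G.td p1 v ≠ ⊤ then some 0
  else none

open Classical in
/-- Payoff of player `i` in the temporal Voronoi game. -/
noncomputable def vorPayoff (G : TemporalGraph) (p1 p2 i : ℕ) : ℕ :=
  (G.V.filter (fun v => vorColor G p1 p2 v = some i)).card

/-- Nash equilibrium of the two-player temporal Voronoi game `Vor(G, 2)`. -/
def vorNE (G : TemporalGraph) (p1 p2 : ℕ) : Prop :=
  p1 ∈ G.V ∧ p2 ∈ G.V ∧
  (∀ q ∈ G.V, vorPayoff G q p2 1 ≤ vorPayoff G p1 p2 1) ∧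
  (∀ q ∈ G.V, vorPayoff G p1 q 2 ≤ vorPayoff G p1 p2 2)

/-! ### Central vertices and boundaries -/

/-- `m` is a central vertex of the interval `[a, b]`: for odd length `ℓ` it is
`a + ⌊ℓ/2⌋`; for even length it is one of `a + ℓ/2 - 1` and `a + ℓ/2`. -/
def IsCentral (a b m : ℕ) : Prop :=
  if (b - a + 1) % 2 = 1 then m = a + (b - a + 1) / 2
  else m = a + (b - a + 1) / 2 - 1 ∨ m = a + (b - a + 1) / 2

open Classical in
/-- The number of vertices reachable from `v` until step `τ`. -/
noncomputable def reachCard (G : TemporalGraph) (v : ℕ) : ℕ :=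
  (G.V.filter (fun w => G.reaches v w)).card

/-- The maximum number of vertices reachable from any vertex. -/
noncomputable def maxReach (G : TemporalGraph) : ℕ := G.V.sup G.reachCard

/-- A nice central vertex: it reaches the maximum number of vertices and is a
central vertex of its (interval of) reachable vertices. -/
def IsNiceCentral (G : TemporalGraph) (v : ℕ) : Prop :=
  v ∈ G.V ∧ G.reachCard v = G.maxReach ∧
  ∃ a b : ℕ, (∀ w : ℕ, G.reaches v w ↔ a ≤ w ∧ w ≤ b) ∧ IsCentral a b v

/-- The first layer in which edge `e` appears (`⊤` if it never does). -/
noncomputable def firstAppear (G : TemporalGraph) (e : Sym2 ℕ) : ℕ∞ :=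
  sInf {t : ℕ∞ | ∃ k : ℕ, t = (k : ℕ∞) ∧ 1 ≤ k ∧ k ≤ G.tau ∧ e ∈ G.E k}

/-- `b ≥ v` is a right boundary of `v` if the edge `{b, b+1}` first appears
strictly after time `td(v, b)`. -/
def IsRightBoundary (G : TemporalGraph) (v b : ℕ) : Prop :=
  v ≤ b ∧ b ∈ G.V ∧ G.td v b < G.firstAppear s(b, b + 1)

/-- `b ≤ v` is a left boundary of `v` if the edge `{b-1, b}` first appears
strictly after time `td(v, b)`. -/
def IsLeftBoundary (G : TemporalGraph) (v b : ℕ) : Prop :=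
  b ≤ v ∧ b ∈ G.V ∧ G.td v b < G.firstAppear s(b - 1, b)

end TemporalGraph
namespace TemporalGraph

variable {G : TemporalGraph}

lemma reachesBy_succ {p v : ℕ} {t : ℕ} :
    G.reachesBy p (t + 1) v ↔
      G.reachesBy p t v ∨ ∃ w, G.reachesBy p t w ∧ s(w, v) ∈ G.layer (t + 1) := Iff.rfl

lemma reachesBy_mono {p : ℕ} {s t : ℕ} (hst : s ≤ t) {v : ℕ}
    (h : G.reachesBy p s v) : G.reachesBy p t v := by
  induction t with
  | zero => simpa [Nat.le_zero.mp hst] using h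
  | succ t ih =>
    rcases Nat.lt_or_ge s (t + 1) with h' | h'
    · exact Or.inl (ih (Nat.lt_succ_iff.mp h'))
    · have : s = t + 1 := le_antisymm hst h'
      subst this; exact h

lemma reachesBy_self (p : ℕ) (t : ℕ) : G.reachesBy p t p :=
  reachesBy_mono (Nat.zero_le t) rfl

lemma E_mono (hS : G.Shrinking) {a b : ℕ} (ha : 1 ≤ a) (hab : a ≤ b) (hb : b ≤ G.tau) :
    G.E b ⊆ G.E a := by
  induction b with
  | zero => omega
  | succ b ih =>
    rcases Nat.lt_or_ge a (b + 1) with h' | h'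
    · exact (hS b (by omega) (by omega)).trans (ih (by omega) (by omega))
    · have : a = b + 1 := le_antisymm hab h'
      subst this; exact fun _ h => h

lemma layer_mono (hS : G.Shrinking) {a b : ℕ} (ha : 1 ≤ a) (hab : a ≤ b) :
    G.layer b ⊆ G.layer a := by
  unfold layer
  split_ifs with h1 h2 h2
  · exact E_mono hS ha hab h1
  · omega
  · exact E_mono hS ha h2 le_rfl
  · exact fun _ h => h

lemma layer_subset_underlying {t : ℕ} (ht : 1 ≤ t) : G.layer t ⊆ G.underlying := by
  unfold layer underlying
  split_ifs with h
  · exact fun e he => Finset.mem_biUnion.mpr ⟨t, Finset.mem_Icc.mpr ⟨ht, h⟩, he⟩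
  · exact fun e he => Finset.mem_biUnion.mpr ⟨G.tau, Finset.mem_Icc.mpr ⟨G.htau, le_rfl⟩, he⟩

lemma td_le_iff {p v : ℕ} {t : ℕ} : G.td p v ≤ (t : ℕ∞) ↔ G.reachesBy p t v := by
  constructor
  · intro h
    by_contra hr
    have hge : ((t : ℕ∞) + 1) ≤ G.td p v := by
      apply le_sInf
      rintro b ⟨k, rfl, hk⟩
      have hkt : ¬ k ≤ t := fun hkt => hr (reachesBy_mono hkt hk)
      have : t + 1 ≤ k := by omega
      exact_mod_cast this
    have h2 : ((t + 1 : ℕ) : ℕ∞) ≤ ((t : ℕ) : ℕ∞) := by push_cast; exact hge.trans h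
    exact absurd (by exact_mod_cast h2) (by omega)
  · intro h
    exact sInf_le ⟨t, rfl, h⟩

lemma reach_step {p w v : ℕ} (hS : G.Shrinking) {t b : ℕ}
    (hw : G.reachesBy p t w) (he : s(w, v) ∈ G.layer b) (htb : t + 1 ≤ b) :
    G.reachesBy p (t + 1) v :=
  Or.inr ⟨w, hw, layer_mono hS (by omega) htb he⟩

lemma td_eq_nat_iff {p v : ℕ} {s : ℕ} :
    G.td p v = (s : ℕ∞) ↔ G.reachesBy p s v ∧ ∀ k < s, ¬ G.reachesBy p k v := by
  constructor
  · intro h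
    refine ⟨td_le_iff.mp h.le, fun k hk hr => ?_⟩
    have : G.td p v ≤ (k : ℕ∞) := td_le_iff.mpr hr
    rw [h] at this
    exact absurd (by exact_mod_cast this) (by omega)
  · rintro ⟨h1, h2⟩
    refine le_antisymm (td_le_iff.mpr h1) ?_
    apply le_sInf
    rintro b ⟨k, rfl, hk⟩
    have : ¬ k < s := fun hks => h2 k hks hk
    exact_mod_cast by omega

lemma td_finite {p v : ℕ} (h : G.td p v ≠ ⊤) : ∃ s : ℕ, G.td p v = (s : ℕ∞) := by
  rcases WithTop.ne_top_iff_exists.mp h with ⟨s, hs⟩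
  exact ⟨s, hs.symm⟩

end TemporalGraph
namespace TemporalGraph

variable {G : TemporalGraph}

lemma nbr_eq (Hloop : ∀ e ∈ G.underlying, ¬ e.IsDiag ∧ ∀ x ∈ e, x ∈ G.V)
    (Hdeg : ∀ w, (G.underlying.filter (fun e => w ∈ e)).card ≤ 2)
    {u prev x1 x2 : ℕ} (hprev : s(prev, u) ∈ G.underlying)
    (h1 : s(x1, u) ∈ G.underlying) (h2 : s(x2, u) ∈ G.underlying)
    (hx1 : x1 ≠ prev) (hx2 : x2 ≠ prev) : x1 = x2 := by
  by_contra hne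
  have hd1 : x1 ≠ u := fun h => (Hloop _ h1).1 (by simp [h, Sym2.mk_isDiag_iff])
  have hd2 : x2 ≠ u := fun h => (Hloop _ h2).1 (by simp [h, Sym2.mk_isDiag_iff])
  have hdp : prev ≠ u := fun h => (Hloop _ hprev).1 (by simp [h, Sym2.mk_isDiag_iff])
  have key : ({s(prev, u), s(x1, u), s(x2, u)} : Finset (Sym2 ℕ)).card = 3 := by
    rw [Finset.card_insert_of_notMem, Finset.card_insert_of_notMem, Finset.card_singleton]
    · simp only [Finset.mem_singleton, Sym2.eq_iff]
      rintro (⟨h, -⟩ | ⟨h, h'⟩)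
      · exact hne h
      · exact hd1 h
    · simp only [Finset.mem_insert, Finset.mem_singleton, Sym2.eq_iff]
      rintro ((⟨h, -⟩ | ⟨h, -⟩) | (⟨h, -⟩ | ⟨h, -⟩))
      · exact hx1 h.symm
      · exact hdp h
      · exact hx2 h.symm
      · exact hdp h
  have hsub : ({s(prev, u), s(x1, u), s(x2, u)} : Finset (Sym2 ℕ)) ⊆
      G.underlying.filter (fun e => u ∈ e) := by
    intro e he
    simp only [Finset.mem_insert, Finset.mem_singleton] at he
    rcases he with rfl | rfl | rfl <;>
      exact Finset.mem_filter.mpr ⟨by assumption, by simp⟩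
  have := (Finset.card_le_card hsub).trans (Hdeg u)
  omega

/-- The tie-chain lemma: a vertex tied at exactly time `s` with a neighbour that
neither player has reached by time `s` is impossible (in a shrinking, loopless,
max-degree-2 temporal graph with distinct players). -/
lemma tieChain (hS : G.Shrinking)
    (Hloop : ∀ e ∈ G.underlying, ¬ e.IsDiag ∧ ∀ x ∈ e, x ∈ G.V)
    (Hdeg : ∀ w, (G.underlying.filter (fun e => w ∈ e)).card ≤ 2)
    {q1 q2 : ℕ} (hq : q1 ≠ q2) :
    ∀ s : ℕ, ∀ u prev : ℕ, G.reachesBy q1 s u → G.reachesBy q2 s u →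
      (∀ k < s, ¬ G.reachesBy q1 k u) → (∀ k < s, ¬ G.reachesBy q2 k u) →
      s(prev, u) ∈ G.underlying →
      ¬ G.reachesBy q1 s prev → ¬ G.reachesBy q2 s prev → False := by
  intro s
  induction s with
  | zero =>
    intro u prev hr1 hr2 _ _ _ _ _
    exact hq ((hr1 : u = q1).symm.trans (hr2 : u = q2))
  | succ s ih =>
    intro u prev hr1 hr2 hm1 hm2 hprev hp1 hp2
    have hn1 : ¬ G.reachesBy q1 s u := hm1 s (by omega)
    have hn2 : ¬ G.reachesBy q2 s u := hm2 s (by omega)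
    rcases hr1 with h | ⟨x1, hx1, he1⟩
    · exact hn1 h
    rcases hr2 with h | ⟨x2, hx2, he2⟩
    · exact hn2 h
    have hx1p : x1 ≠ prev := fun h => hp1 (h ▸ Or.inl hx1)
    have hx2p : x2 ≠ prev := fun h => hp2 (h ▸ Or.inl hx2)
    have he1u : s(x1, u) ∈ G.underlying := layer_subset_underlying (by omega) he1
    have he2u : s(x2, u) ∈ G.underlying := layer_subset_underlying (by omega) he2
    have hw : x1 = x2 := nbr_eq Hloop Hdeg hprev he1u he2u hx1p hx2p
    subst hw
    -- x1 is tied at exactly time s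
    have hmin1 : ∀ k < s, ¬ G.reachesBy q1 k x1 := by
      intro k hk hr
      exact hn1 (reachesBy_mono (by omega) (reach_step hS hr he1 (by omega)))
    have hmin2 : ∀ k < s, ¬ G.reachesBy q2 k x1 := by
      intro k hk hr
      exact hn2 (reachesBy_mono (by omega) (reach_step hS hr he2 (by omega)))
    exact ih x1 u hx1 hx2 hmin1 hmin2 (Sym2.eq_swap ▸ he1u) hn1 hn2

/-- A live edge into an unreached vertex must come from a strictly-player-1 vertex. -/
lemma awit (hS : G.Shrinking)
    (Hloop : ∀ e ∈ G.underlying, ¬ e.IsDiag ∧ ∀ x ∈ e, x ∈ G.V)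
    (Hdeg : ∀ w, (G.underlying.filter (fun e => w ∈ e)).card ≤ 2)
    {q1 q2 : ℕ} (hq : q1 ≠ q2) {t v a : ℕ}
    (hm1 : ¬ G.reachesBy q1 t v) (hm2 : ¬ G.reachesBy q2 t v)
    (ha : G.reachesBy q1 t a) (hae : s(a, v) ∈ G.layer (t + 1)) :
    G.td q1 a ≤ (t : ℕ∞) ∧ G.td q1 a < G.td q2 a := by
  have h1 : G.td q1 a ≤ (t : ℕ∞) := td_le_iff.mpr ha
  refine ⟨h1, ?_⟩
  by_contra hle
  push_neg at hle
  rcases lt_or_eq_of_le hle with hlt | heq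
  · -- td q2 a < td q1 a ≤ t : then q2 reaches v by time t, contradiction
    have hfin : G.td q2 a ≠ ⊤ := ne_top_of_lt (hlt.trans_le h1)
    rcases td_finite hfin with ⟨k, hk⟩
    have hkt : (k : ℕ∞) < (t : ℕ∞) := hk ▸ (hlt.trans_le h1)
    have hktn : k < t := by exact_mod_cast hkt
    have hra : G.reachesBy q2 k a := td_le_iff.mp hk.le
    exact hm2 (reachesBy_mono (by omega) (reach_step hS hra hae (by omega)))
  · -- tie: apply the tie-chain lemma
    have hfin : G.td q1 a ≠ ⊤ := fun h => by simp [h] at h1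
    rcases td_finite hfin with ⟨s, hs⟩
    have hst : s ≤ t := by exact_mod_cast hs ▸ h1
    have he1 := td_eq_nat_iff.mp hs
    have he2 := td_eq_nat_iff.mp (heq ▸ hs)
    exact tieChain hS Hloop Hdeg hq s a v he1.1 he2.1 he1.2 he2.2
      (Sym2.eq_swap ▸ layer_subset_underlying (by omega) hae)
      (fun h => hm1 (reachesBy_mono hst h))
      (fun h => hm2 (reachesBy_mono hst h))

end TemporalGraph
namespace TemporalGraph

variable {G : TemporalGraph}

open Classical in
/-- The predicted coloring at time `t` in terms of temporal distances. -/
noncomputable def Dcol (G : TemporalGraph) (p1 p2 : ℕ) (t v : ℕ) : Option ℕ :=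
  if G.td p1 v ≤ (t : ℕ∞) ∧ G.td p1 v < G.td p2 v then some 1
  else if G.td p2 v ≤ (t : ℕ∞) ∧ G.td p2 v < G.td p1 v then some 2
  else if G.td p1 v = G.td p2 v ∧ G.td p1 v ≤ (t : ℕ∞) then some 0
  else none

lemma Dcol_eq_one_iff {p1 p2 t v : ℕ} :
    Dcol G p1 p2 t v = some 1 ↔ G.td p1 v ≤ (t : ℕ∞) ∧ G.td p1 v < G.td p2 v := by
  unfold Dcol; split_ifs with h1 h2 h3 <;> simp_all

lemma Dcol_eq_two_iff {p1 p2 t v : ℕ} :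
    Dcol G p1 p2 t v = some 2 ↔ G.td p2 v ≤ (t : ℕ∞) ∧ G.td p2 v < G.td p1 v := by
  constructor
  · intro h
    unfold Dcol at h
    split_ifs at h with c1 c2 c3 <;>
      first
      | exact c2
      | exact absurd h (by simp)
  · intro hc
    unfold Dcol
    rw [if_neg (fun c => absurd c.2 (not_lt.mpr hc.2.le)), if_pos hc]

lemma Dcol_eq_zero {p1 p2 t v : ℕ} (h : G.td p1 v = G.td p2 v)
    (h' : G.td p1 v ≤ (t : ℕ∞)) : Dcol G p1 p2 t v = some 0 := by
  unfold Dcol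
  rw [if_neg (fun hc => absurd h (ne_of_lt hc.2)),
    if_neg (fun hc => absurd h.symm (ne_of_lt hc.2)), if_pos ⟨h, h'⟩]

lemma Dcol_eq_none {p1 p2 t v : ℕ} (h1 : ¬ G.reachesBy p1 t v)
    (h2 : ¬ G.reachesBy p2 t v) : Dcol G p1 p2 t v = none := by
  unfold Dcol
  rw [if_neg (fun hc => h1 (td_le_iff.mp hc.1)),
    if_neg (fun hc => h2 (td_le_iff.mp hc.1)),
    if_neg (fun hc => h1 (td_le_iff.mp hc.2))]

/-- Main invariant: on a shrinking, loopless, max-degree-2 temporal graph, the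
diffusion coloring equals the distance-based coloring at every time step. -/
lemma main_inv (hS : G.Shrinking)
    (Hloop : ∀ e ∈ G.underlying, ¬ e.IsDiag ∧ ∀ x ∈ e, x ∈ G.V)
    (Hdeg : ∀ w, (G.underlying.filter (fun e => w ∈ e)).card ≤ 2)
    {p1 p2 : ℕ} (hp : p1 ≠ p2) :
    ∀ t v, G.diffColoring p1 p2 t v = Dcol G p1 p2 t v := by
  intro t
  induction t with
  | zero =>
    intro v
    show diffInit p1 p2 v = _
    unfold diffInit
    have e1 : G.td p1 v ≤ (0 : ℕ∞) ↔ v = p1 := by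
      rw [show ((0:ℕ∞)) = ((0:ℕ):ℕ∞) by norm_num, td_le_iff]; exact Iff.rfl
    have e2 : G.td p2 v ≤ (0 : ℕ∞) ↔ v = p2 := by
      rw [show ((0:ℕ∞)) = ((0:ℕ):ℕ∞) by norm_num, td_le_iff]; exact Iff.rfl
    by_cases hv1 : v = p1
    · have hne2 : v ≠ p2 := fun h => hp (hv1.symm.trans h)
      rw [if_neg (fun h => hne2 h.2), if_pos hv1]
      have ht1 : G.td p1 v ≤ ((0:ℕ) : ℕ∞) := td_le_iff.mpr hv1
      have ht2 : ¬ G.td p2 v ≤ (0 : ℕ∞) := fun h => hne2 (e2.mp h)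
      have : G.td p1 v < G.td p2 v := by
        refine lt_of_le_of_lt (by exact_mod_cast ht1) (lt_of_not_ge ht2)
      exact (Dcol_eq_one_iff.mpr ⟨by exact_mod_cast ht1, this⟩).symm
    · by_cases hv2 : v = p2
      · rw [if_neg (fun h => hv1 h.1), if_neg hv1, if_pos hv2]
        have ht2 : G.td p2 v ≤ ((0:ℕ) : ℕ∞) := td_le_iff.mpr hv2
        have ht1 : ¬ G.td p1 v ≤ (0 : ℕ∞) := fun h => hv1 (e1.mp h)
        have : G.td p2 v < G.td p1 v := by
          refine lt_of_le_of_lt (by exact_mod_cast ht2) (lt_of_not_ge ht1)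
        exact (Dcol_eq_two_iff.mpr ⟨by exact_mod_cast ht2, this⟩).symm
      · rw [if_neg (fun h => hv1 h.1), if_neg hv1, if_neg hv2]
        exact (Dcol_eq_none (p1 := p1) (p2 := p2) (t := 0) (v := v) (fun h => hv1 h) (fun h => hv2 h)).symm
  | succ t ih =>
    intro v
    have hrw : G.diffColoring p1 p2 t = fun u => Dcol G p1 p2 t u := funext ih
    show diffStep G.V (G.layer (t + 1)) (G.diffColoring p1 p2 t) v = _
    rw [hrw]
    set L := G.layer (t + 1) with hL
    by_cases h1 : G.td p1 v ≤ (t : ℕ∞) ∧ G.td p1 v < G.td p2 v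
    · have hv : Dcol G p1 p2 t v = some 1 := Dcol_eq_one_iff.mpr h1
      have ht1 : G.td p1 v ≤ ((t + 1 : ℕ) : ℕ∞) := h1.1.trans (by exact_mod_cast Nat.le_succ t)
      simp only [diffStep, hv]
      exact (Dcol_eq_one_iff.mpr ⟨ht1, h1.2⟩).symm
    by_cases h2 : G.td p2 v ≤ (t : ℕ∞) ∧ G.td p2 v < G.td p1 v
    · have hv : Dcol G p1 p2 t v = some 2 := Dcol_eq_two_iff.mpr h2
      have ht2 : G.td p2 v ≤ ((t + 1 : ℕ) : ℕ∞) := h2.1.trans (by exact_mod_cast Nat.le_succ t)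
      simp only [diffStep, hv]
      exact (Dcol_eq_two_iff.mpr ⟨ht2, h2.2⟩).symm
    by_cases h0 : G.td p1 v = G.td p2 v ∧ G.td p1 v ≤ (t : ℕ∞)
    · have hv : Dcol G p1 p2 t v = some 0 := Dcol_eq_zero h0.1 h0.2
      simp only [diffStep, hv]
      exact (Dcol_eq_zero h0.1 (h0.2.trans (by exact_mod_cast Nat.le_succ t))).symm
    -- uncolored at time t: neither player has reached v
    have hm1 : ¬ G.reachesBy p1 t v := by
      intro hr
      have hle1 : G.td p1 v ≤ (t : ℕ∞) := td_le_iff.mpr hr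
      rcases lt_trichotomy (G.td p1 v) (G.td p2 v) with h | h | h
      · exact h1 ⟨hle1, h⟩
      · exact h0 ⟨h, hle1⟩
      · exact h2 ⟨(le_of_lt h).trans hle1, h⟩
    have hm2 : ¬ G.reachesBy p2 t v := by
      intro hr
      have hle2 : G.td p2 v ≤ (t : ℕ∞) := td_le_iff.mpr hr
      rcases lt_trichotomy (G.td p1 v) (G.td p2 v) with h | h | h
      · exact h1 ⟨(le_of_lt h).trans hle2, h⟩
      · exact h0 ⟨h, h ▸ hle2⟩
      · exact h2 ⟨hle2, h⟩
    have hv : Dcol G p1 p2 t v = none := Dcol_eq_none hm1 hm2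
    simp only [diffStep, hv]
    -- helper facts
    have hS1reach : (∃ u, s(u, v) ∈ L ∧ Dcol G p1 p2 t u = some 1) →
        G.reachesBy p1 (t + 1) v := by
      rintro ⟨u, hu, hDu⟩
      have := Dcol_eq_one_iff.mp hDu
      exact reach_step hS (td_le_iff.mp this.1) hu le_rfl
    have hS2reach : (∃ u, s(u, v) ∈ L ∧ Dcol G p1 p2 t u = some 2) →
        G.reachesBy p2 (t + 1) v := by
      rintro ⟨u, hu, hDu⟩
      have := Dcol_eq_two_iff.mp hDu
      exact reach_step hS (td_le_iff.mp this.1) hu le_rfl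
    by_cases hA1 : G.reachesBy p1 (t + 1) v
    · -- player 1 arrives at time t+1
      have hwit1 : ∃ a, G.reachesBy p1 t a ∧ s(a, v) ∈ L := by
        rcases hA1 with h | ⟨a, ha, hae⟩
        · exact absurd h hm1
        · exact ⟨a, ha, hae⟩
      obtain ⟨a, ha, hae⟩ := hwit1
      have hstrict1 := awit hS Hloop Hdeg hp hm1 hm2 ha hae
      have hvV : v ∈ G.V := by
        have := (Hloop _ (layer_subset_underlying (by omega) hae)).2
        exact this v (Sym2.mem_mk_right a v)
      have hS1 : ∃ u, s(u, v) ∈ L ∧ Dcol G p1 p2 t u = some 1 :=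
        ⟨a, hae, Dcol_eq_one_iff.mpr hstrict1⟩
      have ht1' : G.td p1 v ≤ ((t + 1 : ℕ) : ℕ∞) := td_le_iff.mpr hA1
      by_cases hA2 : G.reachesBy p2 (t + 1) v
      · -- both arrive: gray
        have hwit2 : ∃ b, G.reachesBy p2 t b ∧ s(b, v) ∈ L := by
          rcases hA2 with h | ⟨b, hb, hbe⟩
          · exact absurd h hm2
          · exact ⟨b, hb, hbe⟩
        obtain ⟨b, hb, hbe⟩ := hwit2
        have hstrict2 := awit hS Hloop Hdeg hp.symm hm2 hm1 hb hbe
        have hS2 : ∃ u, s(u, v) ∈ L ∧ Dcol G p1 p2 t u = some 2 :=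
          ⟨b, hbe, Dcol_eq_two_iff.mpr ⟨hstrict2.1, hstrict2.2⟩⟩
        rw [if_neg (fun hc => hc.2.2 hS2), if_neg (fun hc => hc.2.2 hS1),
          if_pos ⟨hvV, hS1, hS2⟩]
        have ht2' : G.td p2 v ≤ ((t + 1 : ℕ) : ℕ∞) := td_le_iff.mpr hA2
        have hg1 : ((t + 1 : ℕ) : ℕ∞) ≤ G.td p1 v := by
          have : (t : ℕ∞) < G.td p1 v := lt_of_not_ge (fun h => hm1 (td_le_iff.mp h))
          rw [show ((t + 1 : ℕ) : ℕ∞) = (t : ℕ∞) + 1 by push_cast; ring]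
          exact ENat.add_one_le_iff (by simp) |>.mpr this
        have hg2 : ((t + 1 : ℕ) : ℕ∞) ≤ G.td p2 v := by
          have : (t : ℕ∞) < G.td p2 v := lt_of_not_ge (fun h => hm2 (td_le_iff.mp h))
          rw [show ((t + 1 : ℕ) : ℕ∞) = (t : ℕ∞) + 1 by push_cast; ring]
          exact ENat.add_one_le_iff (by simp) |>.mpr this
        exact (Dcol_eq_zero ((le_antisymm ht1' hg1).trans (le_antisymm ht2' hg2).symm)
          ht1').symm
      · -- only player 1 arrives
        have hnS2 : ¬ ∃ u, s(u, v) ∈ L ∧ Dcol G p1 p2 t u = some 2 :=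
          fun h => hA2 (hS2reach h)
        rw [if_pos ⟨hvV, hS1, hnS2⟩]
        have hlt : G.td p1 v < G.td p2 v :=
          lt_of_le_of_lt ht1' (lt_of_not_ge (fun h => hA2 (td_le_iff.mp h)))
        exact (Dcol_eq_one_iff.mpr ⟨ht1', hlt⟩).symm
    · by_cases hA2 : G.reachesBy p2 (t + 1) v
      · -- only player 2 arrives
        have hwit2 : ∃ b, G.reachesBy p2 t b ∧ s(b, v) ∈ L := by
          rcases hA2 with h | ⟨b, hb, hbe⟩
          · exact absurd h hm2
          · exact ⟨b, hb, hbe⟩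
        obtain ⟨b, hb, hbe⟩ := hwit2
        have hstrict2 := awit hS Hloop Hdeg hp.symm hm2 hm1 hb hbe
        have hvV : v ∈ G.V := by
          have := (Hloop _ (layer_subset_underlying (by omega) hbe)).2
          exact this v (Sym2.mem_mk_right b v)
        have hS2 : ∃ u, s(u, v) ∈ L ∧ Dcol G p1 p2 t u = some 2 :=
          ⟨b, hbe, Dcol_eq_two_iff.mpr ⟨hstrict2.1, hstrict2.2⟩⟩
        have hnS1 : ¬ ∃ u, s(u, v) ∈ L ∧ Dcol G p1 p2 t u = some 1 :=
          fun h => hA1 (hS1reach h)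
        rw [if_neg (fun hc => hnS1 hc.2.1), if_pos ⟨hvV, hS2, hnS1⟩]
        have ht2' : G.td p2 v ≤ ((t + 1 : ℕ) : ℕ∞) := td_le_iff.mpr hA2
        have hlt : G.td p2 v < G.td p1 v :=
          lt_of_le_of_lt ht2' (lt_of_not_ge (fun h => hA1 (td_le_iff.mp h)))
        exact (Dcol_eq_two_iff.mpr ⟨ht2', hlt⟩).symm
      · -- neither arrives
        have hnS1 : ¬ ∃ u, s(u, v) ∈ L ∧ Dcol G p1 p2 t u = some 1 :=
          fun h => hA1 (hS1reach h)
        have hnS2 : ¬ ∃ u, s(u, v) ∈ L ∧ Dcol G p1 p2 t u = some 2 :=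
          fun h => hA2 (hS2reach h)
        rw [if_neg (fun hc => hnS1 hc.2.1), if_neg (fun hc => hnS2 hc.2.1),
          if_neg (fun hc => hnS1 hc.2.1)]
        exact (Dcol_eq_none hA1 hA2).symm

end TemporalGraph
namespace TemporalGraph

variable {G : TemporalGraph}

lemma reach_mem_V (HV : ∀ e ∈ G.underlying, ¬ e.IsDiag ∧ ∀ x ∈ e, x ∈ G.V)
    {p : ℕ} (hp : p ∈ G.V) : ∀ t v, G.reachesBy p t v → v ∈ G.V := by
  intro t
  induction t with
  | zero => intro v hv; rwa [(hv : v = p)]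
  | succ t ih =>
    rintro v (h | ⟨w, hw, he⟩)
    · exact ih v h
    · exact (HV _ (layer_subset_underlying (by omega) he)).2 v (Sym2.mem_mk_right w v)

lemma reach_stable (hS : G.Shrinking) {p : ℕ} {s : ℕ}
    (hstab : ∀ w, G.reachesBy p (s + 1) w → G.reachesBy p s w) :
    ∀ j w, G.reachesBy p (s + j) w → G.reachesBy p s w := by
  intro j
  induction j with
  | zero => exact fun w h => h
  | succ j ih =>
    rintro w (h | ⟨x, hx, he⟩)
    · exact ih w h
    · exact hstab w (reach_step hS (ih x hx) he (Nat.succ_le_succ (Nat.le_add_right s j)))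

open Classical in
lemma reach_bound (hS : G.Shrinking)
    (HV : ∀ e ∈ G.underlying, ¬ e.IsDiag ∧ ∀ x ∈ e, x ∈ G.V)
    {p : ℕ} (hp : p ∈ G.V) {k v : ℕ} (h : G.reachesBy p k v) :
    G.reachesBy p (G.tau + G.n) v := by
  have hstab : ∃ s < G.n, ∀ w, G.reachesBy p (s + 1) w → G.reachesBy p s w := by
    by_contra hc
    push_neg at hc
    have hcard : ∀ s ≤ G.n, s + 1 ≤ (G.V.filter (fun w => G.reachesBy p s w)).card := by
      intro s
      induction s with
      | zero =>
        intro _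
        have : p ∈ G.V.filter (fun w => G.reachesBy p 0 w) :=
          Finset.mem_filter.mpr ⟨hp, rfl⟩
        simpa using Finset.card_pos.mpr ⟨p, this⟩
      | succ s ih =>
        intro hsn
        obtain ⟨w, hw1, hw2⟩ := hc s (by omega)
        have hss : G.V.filter (fun w => G.reachesBy p s w) ⊂
            G.V.filter (fun w => G.reachesBy p (s + 1) w) := by
          refine Finset.ssubset_iff_of_subset ?_ |>.mpr ?_
          · intro x hx
            have := Finset.mem_filter.mp hx
            exact Finset.mem_filter.mpr ⟨this.1, reachesBy_mono (by omega) this.2⟩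
          · exact ⟨w, Finset.mem_filter.mpr ⟨reach_mem_V HV hp _ w hw1, hw1⟩,
              fun hx => hw2 (Finset.mem_filter.mp hx).2⟩
        have := Finset.card_lt_card hss
        have := ih (by omega)
        omega
    have h1 := hcard G.n le_rfl
    have h2 : (G.V.filter (fun w => G.reachesBy p G.n w)).card ≤ G.V.card :=
      Finset.card_le_card (Finset.filter_subset _ _)
    have h3 : G.V.card = G.n := by
      simp [V, Nat.card_Icc]
    omega
  obtain ⟨s, hsn, hstab⟩ := hstab
  rcases le_or_gt k (G.tau + G.n) with hk | hk
  · exact reachesBy_mono hk h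
  · have : G.reachesBy p (s + (k - s)) v := by
      rwa [Nat.add_sub_cancel' (by omega)]
    exact reachesBy_mono (by omega) (reach_stable hS hstab (k - s) v this)

lemma diff_trivial (p : ℕ) :
    ∀ t v, G.diffColoring p p t v = if v = p then some 0 else none := by
  intro t
  induction t with
  | zero =>
    intro v
    show diffInit p p v = _
    unfold diffInit
    split_ifs with h1 h2 h3 <;> simp_all
  | succ t ih =>
    intro v
    have hrw : G.diffColoring p p t = fun u => if u = p then some 0 else none := funext ih
    show diffStep G.V (G.layer (t + 1)) (G.diffColoring p p t) v = _
    rw [hrw]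
    by_cases hv : v = p
    · simp only [diffStep, if_pos hv]
    · simp only [diffStep, if_neg hv]
      have h1 : ¬ ∃ u, s(u, v) ∈ G.layer (t + 1) ∧
          (if u = p then some (0:ℕ) else none) = some 1 := by
        rintro ⟨u, -, hu⟩
        split_ifs at hu <;> simp_all
      have h2 : ¬ ∃ u, s(u, v) ∈ G.layer (t + 1) ∧
          (if u = p then some (0:ℕ) else none) = some 2 := by
        rintro ⟨u, -, hu⟩
        split_ifs at hu <;> simp_all
      rw [if_neg (fun hc => h1 hc.2.1), if_neg (fun hc => h2 hc.2.1),
        if_neg (fun hc => h1 hc.2.1)]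

lemma vorColor_eq_one_iff {p1 p2 v : ℕ} :
    G.vorColor p1 p2 v = some 1 ↔ G.td p1 v < G.td p2 v := by
  unfold vorColor
  split_ifs with c1 c2 c3 <;> simp_all

lemma vorColor_eq_two_iff {p1 p2 v : ℕ} :
    G.vorColor p1 p2 v = some 2 ↔ G.td p2 v < G.td p1 v := by
  unfold vorColor
  split_ifs with c1 c2 c3 <;>
    first
    | exact ⟨fun h => by simp at h, fun h => absurd h (not_lt.mpr c1.le)⟩
    | simp_all

end TemporalGraph
namespace TemporalGraph

lemma cycle_loop {n : ℕ} (hn : 3 ≤ n) :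
    ∀ e ∈ cycleEdges n, ¬ e.IsDiag ∧ ∀ x ∈ e, x ∈ Finset.Icc 1 n := by
  intro e he
  unfold cycleEdges pathEdges at he
  simp only [Finset.mem_insert, Finset.mem_image, Finset.mem_Icc] at he
  rcases he with rfl | ⟨i, ⟨hi1, hi2⟩, rfl⟩
  · refine ⟨by simp only [Sym2.mk_isDiag_iff]; omega, fun x hx => ?_⟩
    rw [Sym2.mem_iff] at hx
    rcases hx with rfl | rfl <;> simp only [Finset.mem_Icc] <;> omega
  · refine ⟨by simp only [Sym2.mk_isDiag_iff]; omega, fun x hx => ?_⟩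
    rw [Sym2.mem_iff] at hx
    rcases hx with rfl | rfl <;> simp only [Finset.mem_Icc] <;> omega

lemma cycle_deg {n : ℕ} (hn : 3 ≤ n) (v : ℕ) :
    ((cycleEdges n).filter (fun e => v ∈ e)).card ≤ 2 := by
  have hmem : ∀ e ∈ (cycleEdges n).filter (fun e => v ∈ e),
      e = s(n, 1) ∧ (v = n ∨ v = 1) ∨
      ∃ i, 1 ≤ i ∧ i ≤ n - 1 ∧ e = s(i, i + 1) ∧ (v = i ∨ v = i + 1) := by
    intro e he
    obtain ⟨he, hv⟩ := Finset.mem_filter.mp he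
    unfold cycleEdges pathEdges at he
    simp only [Finset.mem_insert, Finset.mem_image, Finset.mem_Icc] at he
    rcases he with rfl | ⟨i, ⟨hi1, hi2⟩, rfl⟩
    · rw [Sym2.mem_iff] at hv
      exact Or.inl ⟨rfl, hv⟩
    · rw [Sym2.mem_iff] at hv
      exact Or.inr ⟨i, hi1, hi2, rfl, hv⟩
  by_cases hv1 : v = 1
  · subst hv1
    have hsub : (cycleEdges n).filter (fun e => 1 ∈ e) ⊆ {s(n, 1), s(1, 2)} := by
      intro e he
      rcases hmem e he with ⟨rfl, -⟩ | ⟨i, hi1, hi2, rfl, hv⟩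
      · simp
      · have : i = 1 := by omega
        subst this
        simp
    exact (Finset.card_le_card hsub).trans
      ((Finset.card_insert_le _ _).trans (by simp))
  by_cases hvn : v = n
  · have hsub : (cycleEdges n).filter (fun e => v ∈ e) ⊆ {s(n, 1), s(n - 1, n - 1 + 1)} := by
      intro e he
      rcases hmem e he with ⟨rfl, -⟩ | ⟨i, hi1, hi2, rfl, hv⟩
      · simp
      · have : i = n - 1 := by omega
        subst this
        simp
    exact (Finset.card_le_card hsub).trans
      ((Finset.card_insert_le _ _).trans (by simp))
  · have hsub : (cycleEdges n).filter (fun e => v ∈ e) ⊆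
        {s(v, v + 1), s(v - 1, v - 1 + 1)} := by
      intro e he
      rcases hmem e he with ⟨rfl, hv⟩ | ⟨i, hi1, hi2, rfl, hv⟩
      · exact absurd hv (by simp [hv1, hvn])
      · rcases hv with rfl | hv
        · simp
        · have : i = v - 1 := by omega
          subst this
          simp
    exact (Finset.card_le_card hsub).trans
      ((Finset.card_insert_le _ _).trans (by simp))

end TemporalGraph

open TemporalGraph

/-- On a monotonically shrinking temporal linear forest or a
monotonically shrinking temporal cycle, for any strategy profile `(p1, p2)` the
final coloring of the two-player temporal diffusion game coincides with the
coloring of the two-player temporal Voronoi game on colors `1` and `2`. -/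
theorem stmt7 (G : TemporalGraph) (hG : G.IsLinearForest ∨ G.IsCycle)
    (hS : G.Shrinking) (p1 p2 : ℕ) (h1 : p1 ∈ G.V) (h2 : p2 ∈ G.V) :
    ∀ v ∈ G.V, ∀ i : ℕ, i = 1 ∨ i = 2 →
      (G.diffFinal p1 p2 v = some i ↔ G.vorColor p1 p2 v = some i) := by
  have Hloop : ∀ e ∈ G.underlying, ¬ e.IsDiag ∧ ∀ x ∈ e, x ∈ G.V := by
    rcases hG with hF | hC
    · exact hF.1
    · rw [hC.2]; exact cycle_loop hC.1
  have Hdeg : ∀ w, (G.underlying.filter (fun e => w ∈ e)).card ≤ 2 := by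
    rcases hG with hF | hC
    · exact hF.2.2
    · intro w; rw [hC.2]; exact cycle_deg hC.1 w
  intro v _ i hi
  by_cases hp : p1 = p2
  · subst hp
    have hd := diff_trivial (G := G) p1 (G.tau + G.n) v
    have hvor : ¬ G.vorColor p1 p1 v = some i := by
      unfold vorColor
      split_ifs with c1 c2
      · exact absurd c1 (lt_irrefl _)
      · rcases hi with rfl | rfl <;> simp
      · simp
    have hdiff : ¬ G.diffFinal p1 p1 v = some i := by
      unfold diffFinal
      rw [hd]
      split_ifs
      · rcases hi with rfl | rfl <;> simp
      · simp
    exact ⟨fun h => absurd h hdiff, fun h => absurd h hvor⟩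
  · have hinv := main_inv hS Hloop Hdeg hp (G.tau + G.n) v
    unfold diffFinal
    rw [hinv]
    rcases hi with rfl | rfl
    · rw [Dcol_eq_one_iff, vorColor_eq_one_iff]
      constructor
      · exact fun h => h.2
      · intro h
        refine ⟨?_, h⟩
        rcases td_finite (ne_top_of_lt h) with ⟨k, hk⟩
        exact td_le_iff.mpr (reach_bound hS Hloop h1 (td_le_iff.mp hk.le))
    · rw [Dcol_eq_two_iff, vorColor_eq_two_iff]
      constructor
      · exact fun h => h.2
      · intro h
        refine ⟨?_, h⟩
        rcases td_finite (ne_top_of_lt h) with ⟨k, hk⟩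
        exact td_le_iff.mpr (reach_bound hS Hloop h2 (td_le_iff.mp hk.le))
end

section
/- There exist a superset temporal path P and a superset temporal cycle C such that the two-player temporal Voronoi games Vor(P, 2) and Vor(C, 2) admit no Nash equilibrium. -/
open Finset

open TemporalGraph

/-! ### Auxiliary machinery for computing temporal distances -/

namespace VorAux

open TemporalGraph

/-- Vertices `v` with `s(w, v) = e` for some `w ∈ S`. -/
def nbrsOf (S : Finset ℕ) (e : Sym2 ℕ) : Finset ℕ :=
  Sym2.lift ⟨fun a b => (if a ∈ S then {b} else ∅) ∪ (if b ∈ S then {a} else ∅),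
    fun a b => by simp [Finset.union_comm]⟩ e

lemma mem_nbrsOf {S : Finset ℕ} {e : Sym2 ℕ} {v : ℕ} :
    v ∈ nbrsOf S e ↔ ∃ w ∈ S, s(w, v) = e := by
  induction e using Sym2.ind with
  | _ a b =>
    simp only [nbrsOf, Sym2.lift_mk, Finset.mem_union]
    constructor
    · intro h
      rcases h with h | h <;> split_ifs at h <;>
        simp only [Finset.mem_singleton, Finset.notMem_empty] at h
      · exact ⟨a, ‹_›, by rw [h]⟩
      · exact ⟨b, ‹_›, by rw [h, Sym2.eq_swap]⟩
    · rintro ⟨w, hw, he⟩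
      rw [Sym2.eq_iff] at he
      rcases he with ⟨rfl, rfl⟩ | ⟨rfl, rfl⟩
      · exact Or.inl (by simp [hw])
      · exact Or.inr (by simp [hw])

/-- Computable set of vertices reachable from `u` within time `t`. -/
def reachSet (G : TemporalGraph) (u : ℕ) : ℕ → Finset ℕ
  | 0 => {u}
  | t + 1 => reachSet G u t ∪ (G.layer (t + 1)).biUnion (nbrsOf (reachSet G u t))

lemma reachesBy_iff (G : TemporalGraph) (u : ℕ) :
    ∀ (t v : ℕ), G.reachesBy u t v ↔ v ∈ reachSet G u t
  | 0, v => by simp [TemporalGraph.reachesBy, reachSet]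
  | t + 1, v => by
    simp only [TemporalGraph.reachesBy, reachSet, Finset.mem_union, Finset.mem_biUnion]
    constructor
    · rintro (h | ⟨w, hw, he⟩)
      · exact Or.inl ((reachesBy_iff G u t v).1 h)
      · exact Or.inr ⟨s(w, v), he, mem_nbrsOf.2 ⟨w, (reachesBy_iff G u t w).1 hw, rfl⟩⟩
    · rintro (h | ⟨e, heE, hv⟩)
      · exact Or.inl ((reachesBy_iff G u t v).2 h)
      · obtain ⟨w, hwS, hwe⟩ := mem_nbrsOf.1 hv
        exact Or.inr ⟨w, (reachesBy_iff G u t w).2 hwS, hwe ▸ heE⟩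

lemma reachSet_mono (G : TemporalGraph) (u : ℕ) {s t : ℕ} (h : s ≤ t) :
    reachSet G u s ⊆ reachSet G u t := by
  induction t with
  | zero => rw [Nat.le_zero.1 h]
  | succ t ih =>
    rcases Nat.lt_or_ge s (t + 1) with h' | h'
    · exact (ih (Nat.lt_succ_iff.1 h')).trans Finset.subset_union_left
    · rw [Nat.le_antisymm h h']

lemma td_eq_of (G : TemporalGraph) (u v t : ℕ) (h1 : v ∈ reachSet G u t)
    (h2 : t = 0 ∨ v ∉ reachSet G u (t - 1)) : G.td u v = (t : ℕ∞) := by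
  unfold TemporalGraph.td
  apply le_antisymm
  · exact sInf_le ⟨t, rfl, (reachesBy_iff G u t v).2 h1⟩
  · apply le_sInf
    rintro x ⟨k, rfl, hk⟩
    rw [reachesBy_iff] at hk
    rcases h2 with rfl | h2
    · simp
    · by_contra hlt
      push_neg at hlt
      have hkt : k < t := by exact_mod_cast hlt
      exact h2 (reachSet_mono G u (by omega) hk)

/-- Payoff computed from a natural-number distance table. -/
def pay (n : ℕ) (f : ℕ → ℕ → ℕ) (p1 p2 i : ℕ) : ℕ :=
  ((Finset.Icc 1 n).filter (fun v =>
    (if f p1 v < f p2 v then some 1 else if f p2 v < f p1 v then some 2 else some 0)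
      = some i)).card

lemma vorPayoff_eq (G : TemporalGraph) (f : ℕ → ℕ → ℕ)
    (hf : ∀ u ∈ G.V, ∀ v ∈ G.V, G.td u v = (f u v : ℕ∞))
    {p1 p2 : ℕ} (h1 : p1 ∈ G.V) (h2 : p2 ∈ G.V) (i : ℕ) :
    G.vorPayoff p1 p2 i = pay G.n f p1 p2 i := by
  rw [TemporalGraph.vorPayoff, pay]
  have hV : G.V = Finset.Icc 1 G.n := rfl
  rw [← hV]
  congr 1
  apply Finset.filter_congr
  intro v hv
  rw [TemporalGraph.vorColor, hf p1 h1 v hv, hf p2 h2 v hv]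
  simp [Nat.cast_lt]

lemma noNE_of (G : TemporalGraph) (f : ℕ → ℕ → ℕ)
    (hf : ∀ u ∈ G.V, ∀ v ∈ G.V, G.td u v = (f u v : ℕ∞))
    (H : ∀ p1 ∈ G.V, ∀ p2 ∈ G.V,
      (∃ q ∈ G.V, pay G.n f p1 p2 1 < pay G.n f q p2 1) ∨
      (∃ q ∈ G.V, pay G.n f p1 p2 2 < pay G.n f p1 q 2)) :
    ∀ p1 p2 : ℕ, ¬ G.vorNE p1 p2 := by
  rintro p1 p2 ⟨h1, h2, hA, hB⟩
  rcases H p1 h1 p2 h2 with ⟨q, hq, hlt⟩ | ⟨q, hq, hlt⟩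
  · have := hA q hq
    rw [vorPayoff_eq G f hf h1 h2 1, vorPayoff_eq G f hf hq h2 1] at this
    omega
  · have := hB q hq
    rw [vorPayoff_eq G f hf h1 h2 2, vorPayoff_eq G f hf h1 hq 2] at this
    omega


def PE : ℕ → Finset (Sym2 ℕ)
  | 1 => {s(2,3), s(3,4), s(4,5), s(5,6)}
  | 2 => {s(3,4), s(4,5), s(5,6), s(6,7)}
  | _ => {s(1,2), s(2,3), s(3,4), s(4,5), s(5,6), s(6,7), s(7,8)}

def PG : TemporalGraph := ⟨8, 3, by norm_num, PE⟩

def Ptd (u v : ℕ) : ℕ := (([[0,3,4,5,6,7,8,9], [3,0,1,2,3,4,5,6], [3,1,0,1,2,3,4,5], [4,3,1,0,1,2,3,4], [4,3,2,1,0,1,2,3], [5,4,3,2,1,0,2,3], [7,6,5,4,3,2,0,3], [9,8,7,6,5,4,3,0]] : List (List ℕ)).getD (u-1) []).getD (v-1) 0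

def CE : ℕ → Finset (Sym2 ℕ)
  | 1 => {s(1,2), s(4,5), s(7,8), s(8,1)}
  | 2 => {s(1,2), s(2,3), s(5,6), s(6,7)}
  | 3 => {s(1,2), s(2,3), s(6,7)}
  | 4 => {s(1,2), s(3,4), s(6,7), s(7,8), s(8,1)}
  | _ => {s(1,2), s(2,3), s(3,4), s(4,5), s(5,6), s(6,7), s(7,8), s(8,1)}

def CG : TemporalGraph := ⟨8, 5, by norm_num, CE⟩

def Ctd (u v : ℕ) : ℕ := (([[0,1,2,4,5,5,4,1], [1,0,2,4,5,6,5,4], [3,2,0,4,5,6,5,4], [5,5,4,0,1,2,3,4], [5,5,4,1,0,2,3,4], [5,6,6,5,2,0,2,4], [4,5,6,6,5,2,0,1], [1,2,3,4,5,2,1,0]] : List (List ℕ)).getD (u-1) []).getD (v-1) 0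

lemma Phtd : ∀ u ∈ PG.V, ∀ v ∈ PG.V, PG.td u v = (Ptd u v : ℕ∞) := by
  have key : ∀ u ∈ Finset.Icc 1 8, ∀ v ∈ Finset.Icc 1 8,
      v ∈ reachSet PG u (Ptd u v) ∧ (Ptd u v = 0 ∨ v ∉ reachSet PG u (Ptd u v - 1)) := by
    decide
  intro u hu v hv
  exact td_eq_of PG u v (Ptd u v) (key u hu v hv).1 (key u hu v hv).2

lemma PH : ∀ p1 ∈ PG.V, ∀ p2 ∈ PG.V,
    (∃ q ∈ PG.V, pay PG.n Ptd p1 p2 1 < pay PG.n Ptd q p2 1) ∨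
    (∃ q ∈ PG.V, pay PG.n Ptd p1 p2 2 < pay PG.n Ptd p1 q 2) := by
  decide


lemma Chtd : ∀ u ∈ CG.V, ∀ v ∈ CG.V, CG.td u v = (Ctd u v : ℕ∞) := by
  have key : ∀ u ∈ Finset.Icc 1 8, ∀ v ∈ Finset.Icc 1 8,
      v ∈ reachSet CG u (Ctd u v) ∧ (Ctd u v = 0 ∨ v ∉ reachSet CG u (Ctd u v - 1)) := by
    decide
  intro u hu v hv
  exact td_eq_of CG u v (Ctd u v) (key u hu v hv).1 (key u hu v hv).2

lemma CH : ∀ p1 ∈ CG.V, ∀ p2 ∈ CG.V,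
    (∃ q ∈ CG.V, pay CG.n Ctd p1 p2 1 < pay CG.n Ctd q p2 1) ∨
    (∃ q ∈ CG.V, pay CG.n Ctd p1 p2 2 < pay CG.n Ctd p1 q 2) := by
  decide

lemma PG_isPath : PG.IsPath := by
  unfold TemporalGraph.IsPath
  exact ⟨by norm_num [PG], by unfold TemporalGraph.underlying; decide⟩

lemma PG_superset : PG.Superset := by
  unfold TemporalGraph.Superset TemporalGraph.underlying; decide

lemma CG_isCycle : CG.IsCycle := by
  unfold TemporalGraph.IsCycle
  exact ⟨by norm_num [CG], by unfold TemporalGraph.underlying TemporalGraph.cycleEdges; decide⟩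

lemma CG_superset : CG.Superset := by
  unfold TemporalGraph.Superset TemporalGraph.underlying; decide

end VorAux

/-- There exist a superset temporal path and a superset temporal
cycle on which the two-player temporal Voronoi game has no Nash equilibrium. -/
theorem stmt9 :
    (∃ G : TemporalGraph, G.IsPath ∧ G.Superset ∧ ∀ p1 p2 : ℕ, ¬ G.vorNE p1 p2) ∧
    (∃ G : TemporalGraph, G.IsCycle ∧ G.Superset ∧ ∀ p1 p2 : ℕ, ¬ G.vorNE p1 p2) := by
  constructor
  · exact ⟨VorAux.PG, VorAux.PG_isPath, VorAux.PG_superset,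
      VorAux.noNE_of VorAux.PG VorAux.Ptd VorAux.Phtd VorAux.PH⟩
  · exact ⟨VorAux.CG, VorAux.CG_isCycle, VorAux.CG_superset,
      VorAux.noNE_of VorAux.CG VorAux.Ctd VorAux.Chtd VorAux.CH⟩
end
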